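/- arXiv:2508.04151 — 5 statements merged into one kernel-verified Lean document; each statement's English description precedes it below -/
import Mathlib

section
/- For every integer k ≥ 1, ζ(2k+1, 3/4) = -(2^(2k-1)/(2k)!)·π^(2k+1)·|E_{2k}| + 2^(2k)·(2^(2k+1)-1)·ζ(2k+1), where ζ(s,a) is the Hurwitz zeta function and E_{2k} is the 2k-th Euler number. -/
/-- Even-index Euler numbers: `E2 k = E_{2k}`, where `1/cosh t = ∑ E_n t^n/n!`
(equivalently, `E_0 = 1`, odd-index Euler numbers vanish, and
`∑_{j≤n} C(2n,2j) E_{2j} = 0` for `n ≥ 1`). -/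
def E2 : ℕ → ℤ
  | 0 => 1
  | n + 1 => -∑ k ∈ (Finset.range (n+1)).attach,
      ((2*(n+1)).choose (2*k.1) : ℤ) * E2 k.1
decreasing_by exact Finset.mem_range.mp k.2

/-- Thue–Morse sequence: `tm 0 = 0`, `tm (2n) = tm n`, `tm (2n+1) = 1 - tm n`. -/
def tm : ℕ → ℕ
  | 0 => 0
  | n + 1 => if (n+1) % 2 = 0 then tm ((n+1)/2) else 1 - tm ((n+1)/2)
decreasing_by all_goals exact Nat.div_lt_self (Nat.succ_pos n) one_lt_two

/-- Paperfolding (dragon-curve) sequence: `pf (2n) = pf n`, `pf (4n+1) = 0`,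
`pf (4n+3) = 1` (with `pf 0 = 0`). -/
def pf : ℕ → ℕ
  | 0 => 0
  | n + 1 => if (n+1) % 2 = 0 then pf ((n+1)/2) else if (n+1) % 4 = 1 then 0 else 1
decreasing_by exact Nat.div_lt_self (Nat.succ_pos n) one_lt_two

open Finset

lemma bern_eval (n : ℕ) (x : ℚ) : (Polynomial.bernoulli n).eval x =
    ∑ i ∈ range (n+1), bernoulli (n-i) * (n.choose i : ℚ) * x^i := by
  simp [Polynomial.bernoulli_def, Polynomial.eval_finset_sum]

lemma bern_add (m : ℕ) (x y : ℚ) : (Polynomial.bernoulli m).eval (x+y) =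
    ∑ k ∈ range (m+1), (m.choose k : ℚ) * (Polynomial.bernoulli k).eval x * y^(m-k) := by
  simp_rw [bern_eval]
  simp_rw [Finset.mul_sum, Finset.sum_mul, add_pow, Finset.mul_sum]
  rw [Finset.sum_sigma', Finset.sum_sigma']
  refine Finset.sum_nbij' (fun p => ⟨m - p.1 + p.2, p.2⟩) (fun p => ⟨m - p.1 + p.2, p.2⟩)
    ?_ ?_ ?_ ?_ ?_
  · rintro ⟨i, j⟩ h
    simp only [Finset.mem_sigma, Finset.mem_range] at h ⊢
    omega
  · rintro ⟨i, j⟩ h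
    simp only [Finset.mem_sigma, Finset.mem_range] at h ⊢
    omega
  · rintro ⟨i, j⟩ h
    simp only [Finset.mem_sigma, Finset.mem_range] at h
    have e : m - (m - i + j) + j = i := by omega
    simp [e]
  · rintro ⟨i, j⟩ h
    simp only [Finset.mem_sigma, Finset.mem_range] at h
    have e : m - (m - i + j) + j = i := by omega
    simp [e]
  · rintro ⟨i, j⟩ h
    simp only [Finset.mem_sigma, Finset.mem_range] at h
    obtain ⟨hi, hj⟩ := h
    have hi' : i ≤ m := by omega
    have hj' : j ≤ i := by omega
    have h1 : m - i + j - j = m - i := by omega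
    have h2 : m - (m - i + j) = i - j := by omega
    simp only [h1, h2]
    have k1 : m.choose i * i.choose j = m.choose j * (m-j).choose (i-j) :=
      Nat.choose_mul hj'
    have k2 : m.choose (m-i+j) * (m-i+j).choose j = m.choose j * (m-j).choose (m-i) := by
      rw [Nat.choose_mul (n := m) (k := m-i+j) (s := j) (by omega),
        show m - i + j - j = m - i from by omega]
    have k3 : (m-j).choose (m-i) = (m-j).choose (i-j) := by
      rw [← Nat.choose_symm (show i - j ≤ m - j by omega)]
      congr 1
      omega
    rw [k3] at k2
    have key : (m.choose i : ℚ) * i.choose j = (m.choose (m-i+j)) * ((m-i+j).choose j) := by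
      rw_mod_cast [k1, k2]
    linear_combination (bernoulli (m-i) * x^j * y^(i-j)) * key

lemma bernoulli'_eq_pow (n : ℕ) : bernoulli' n = (-1)^n * bernoulli n := by
  rcases eq_or_ne n 1 with rfl | hn
  · simp [bernoulli_one, bernoulli'_one]; norm_num
  · rw [bernoulli_eq_bernoulli'_of_ne_one hn]
    rcases Nat.even_or_odd n with he | ho
    · rw [he.neg_one_pow, one_mul]
    · rcases Nat.lt_or_ge n 2 with h2 | h2
      · interval_cases n <;> simp_all
      · rw [bernoulli'_eq_zero_of_odd ho (by omega), mul_zero]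

lemma bern_reflect (n : ℕ) (x : ℚ) :
    (Polynomial.bernoulli n).eval (1-x) = (-1)^n * (Polynomial.bernoulli n).eval x := by
  have h := bern_add n 1 (-x)
  rw [show (1 : ℚ) + -x = 1 - x by ring] at h
  rw [h, bern_eval, Finset.mul_sum]
  rw [← Finset.sum_range_reflect]
  refine Finset.sum_congr rfl fun k hk => ?_
  rw [Finset.mem_range] at hk
  have hk' : k ≤ n := by omega
  have e : n + 1 - 1 - k = n - k := by omega
  have e2 : n - (n - k) = k := by omega
  rw [e, e2, Nat.choose_symm hk', Polynomial.bernoulli_eval_one, bernoulli'_eq_pow,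
    neg_pow x]
  have hsg : (-1:ℚ)^(n-k) * (-1:ℚ)^k = (-1)^n := by
    rw [← pow_add]; congr 1; omega
  linear_combination ((n.choose k : ℚ) * bernoulli (n-k) * x^k) * hsg

lemma bern_half_odd (n : ℕ) (hn : Odd n) : (Polynomial.bernoulli n).eval (1/2 : ℚ) = 0 := by
  have h := bern_reflect n (1/2)
  rw [show (1:ℚ) - 1/2 = 1/2 by norm_num, hn.neg_one_pow, neg_one_mul] at h
  linarith

lemma sum_range_even_odd (f : ℕ → ℚ) (N : ℕ) :
    ∑ i ∈ range (2*N), f i = ∑ j ∈ range N, f (2*j) + ∑ j ∈ range N, f (2*j+1) := by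
  induction N with
  | zero => simp
  | succ n ih =>
    rw [show 2*(n+1) = 2*n+1+1 by ring, Finset.sum_range_succ, Finset.sum_range_succ,
      Finset.sum_range_succ (fun j => f (2*j)), Finset.sum_range_succ (fun j => f (2*j+1)), ih]
    ring

lemma key_sum (n : ℕ) (hn : 1 ≤ n) :
    ∑ j ∈ range (n+1), ((2*n+1).choose (2*j+1) : ℚ) * 4^(2*j+1) *
      (Polynomial.bernoulli (2*j+1)).eval (1/4 : ℚ) = 0 := by
  set m := 2*n+1 with hm
  have hodd : Odd m := ⟨n, by omega⟩
  -- S+ : sum with 4^i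
  have hplus : ∑ i ∈ range (m+1), (m.choose i : ℚ) * (Polynomial.bernoulli i).eval (1/4) * 4^i
      = 0 := by
    have h := bern_add m (1/4 : ℚ) (1/4)
    rw [show (1:ℚ)/4 + 1/4 = 1/2 by norm_num, bern_half_odd m hodd] at h
    have : ∑ i ∈ range (m+1), (m.choose i : ℚ) * (Polynomial.bernoulli i).eval (1/4) * 4^i
        = 4^m * ∑ k ∈ range (m+1), (m.choose k : ℚ) *
          (Polynomial.bernoulli k).eval (1/4) * (1/4)^(m-k) := by
      rw [Finset.mul_sum]
      refine Finset.sum_congr rfl fun i hi => ?_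
      rw [Finset.mem_range] at hi
      have : (4:ℚ)^m = 4^i * 4^(m-i) := by rw [← pow_add]; congr 1; omega
      rw [this]
      have h4 : (4:ℚ)^(m-i) * (1/4)^(m-i) = 1 := by
        rw [← mul_pow]; norm_num
      linear_combination (-(4:ℚ)^i * (m.choose i : ℚ) *
        Polynomial.eval (1/4 : ℚ) (Polynomial.bernoulli i)) * h4
    rw [this, ← h, mul_zero]
  have hminus : ∑ i ∈ range (m+1), (m.choose i : ℚ) * (Polynomial.bernoulli i).eval (1/4) * (-4)^i
      = 0 := by
    have h := bern_add m (1/4 : ℚ) (-(1/4))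
    rw [show (1:ℚ)/4 + -(1/4) = 0 by norm_num, Polynomial.bernoulli_eval_zero,
      bernoulli_eq_bernoulli'_of_ne_one (by omega),
      bernoulli'_eq_zero_of_odd hodd (by omega)] at h
    have : ∑ i ∈ range (m+1), (m.choose i : ℚ) * (Polynomial.bernoulli i).eval (1/4) * (-4)^i
        = (-4)^m * ∑ k ∈ range (m+1), (m.choose k : ℚ) *
          (Polynomial.bernoulli k).eval (1/4) * (-(1/4))^(m-k) := by
      rw [Finset.mul_sum]
      refine Finset.sum_congr rfl fun i hi => ?_
      rw [Finset.mem_range] at hi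
      have : (-4:ℚ)^m = (-4)^i * (-4)^(m-i) := by rw [← pow_add]; congr 1; omega
      rw [this]
      have h4 : (-4:ℚ)^(m-i) * (-(1/4))^(m-i) = 1 := by
        rw [← mul_pow]; norm_num
      linear_combination (-(-4:ℚ)^i * (m.choose i : ℚ) *
        Polynomial.eval (1/4 : ℚ) (Polynomial.bernoulli i)) * h4
    rw [this, ← h, mul_zero]
  have hdiff := sub_eq_zero_of_eq (hplus.trans hminus.symm)
  rw [← Finset.sum_sub_distrib] at hdiff
  have hsplit : ∑ i ∈ range (m+1),
      ((m.choose i : ℚ) * (Polynomial.bernoulli i).eval (1/4) * 4^i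
        - (m.choose i : ℚ) * (Polynomial.bernoulli i).eval (1/4) * (-4)^i)
      = ∑ j ∈ range (n+1), 2 * ((m.choose (2*j+1) : ℚ) * 4^(2*j+1) *
          (Polynomial.bernoulli (2*j+1)).eval (1/4)) := by
    rw [show m + 1 = 2*(n+1) by omega, sum_range_even_odd]
    have heven : ∑ j ∈ range (n+1),
        ((m.choose (2*j) : ℚ) * (Polynomial.bernoulli (2*j)).eval (1/4) * 4^(2*j)
          - (m.choose (2*j) : ℚ) * (Polynomial.bernoulli (2*j)).eval (1/4) * (-4)^(2*j)) = 0 := by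
      refine Finset.sum_eq_zero fun j _ => ?_
      rw [show ((-4:ℚ))^(2*j) = 4^(2*j) by rw [pow_mul, pow_mul]; norm_num]
      ring
    rw [heven, zero_add]
    refine Finset.sum_congr rfl fun j _ => ?_
    rw [show ((-4:ℚ))^(2*j+1) = -(4^(2*j+1)) by
      rw [pow_succ, pow_succ, pow_mul, pow_mul]; norm_num]
    ring
  rw [hsplit, ← Finset.mul_sum] at hdiff
  have h2 : (2:ℚ) ≠ 0 := two_ne_zero
  have := mul_eq_zero.mp hdiff
  rcases this with h | h
  · exact absurd h h2
  · calc ∑ j ∈ range (n+1), ((2*n+1).choose (2*j+1) : ℚ) * 4^(2*j+1) *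
        (Polynomial.bernoulli (2*j+1)).eval (1/4 : ℚ)
        = ∑ j ∈ range (n+1), (m.choose (2*j+1) : ℚ) * 4^(2*j+1) *
        (Polynomial.bernoulli (2*j+1)).eval (1/4 : ℚ) := rfl
      _ = 0 := h

noncomputable def cB (j : ℕ) : ℚ :=
  -(4:ℚ)^(2*j+1) * (Polynomial.bernoulli (2*j+1)).eval (1/4 : ℚ) / (2*j+1)

lemma cB_sum (N : ℕ) (hN : 1 ≤ N) :
    ∑ j ∈ range (N+1), ((2*N).choose (2*j) : ℚ) * cB j = 0 := by
  have hk := key_sum N hN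
  have hstep : ∀ j ∈ range (N+1), ((2*N).choose (2*j) : ℚ) * cB j =
      -(1/(2*N+1)) * (((2*N+1).choose (2*j+1) : ℚ) * 4^(2*j+1) *
        (Polynomial.bernoulli (2*j+1)).eval (1/4 : ℚ)) := by
    intro j hj
    have hnat : (2*N+1) * ((2*N).choose (2*j)) = ((2*N+1).choose (2*j+1)) * (2*j+1) := by
      have := Nat.add_one_mul_choose_eq (2*N) (2*j)
      simpa [Nat.succ_eq_add_one] using this
    have hq : ((2*N:ℚ)+1) * ((2*N).choose (2*j) : ℚ) =
        ((2*N+1).choose (2*j+1) : ℚ) * (2*j+1) := by exact_mod_cast hnat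
    rw [cB]
    have h1 : ((2*j:ℚ)+1) ≠ 0 := by positivity
    have h2 : ((2*N:ℚ)+1) ≠ 0 := by positivity
    field_simp
    push_cast
    push_cast at hq
    linear_combination (-
      (Polynomial.bernoulli (2*j+1)).eval (1/4 : ℚ)) * hq
  rw [Finset.sum_congr rfl hstep, ← Finset.mul_sum]
  push_cast at hk ⊢
  rw [hk, mul_zero]

lemma E2_eq_cB (k : ℕ) : (E2 k : ℚ) = cB k := by
  induction k using Nat.strong_induction_on with
  | _ k ih =>
    match k with
    | 0 =>
      rw [E2, cB]
      norm_num [bern_eval, Finset.sum_range_succ, bernoulli_one]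
    | n + 1 =>
      rw [E2]
      push_cast
      rw [Finset.sum_attach (Finset.range (n+1))
        (fun j => ((2*(n+1)).choose (2*j) : ℚ) * (E2 j : ℚ))]
      have hrw : ∀ j ∈ range (n+1), ((2*(n+1)).choose (2*j) : ℚ) * (E2 j : ℚ)
          = ((2*(n+1)).choose (2*j) : ℚ) * cB j := by
        intro j hj
        rw [ih j (by simpa using hj)]
      rw [Finset.sum_congr rfl hrw]
      have h0 := cB_sum (n+1) (by omega)
      rw [Finset.sum_range_succ] at h0
      have hch : ((2*(n+1)).choose (2*(n+1)) : ℚ) = 1 := by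
        rw [Nat.choose_self]; norm_num
      rw [hch, one_mul] at h0
      linarith

lemma summ_base (k : ℕ) (hk : 1 ≤ k) :
    Summable (fun n : ℕ => 1/((n:ℝ)+1)^(2*k+1)) := by
  have h : Summable (fun n : ℕ => 1/((n:ℝ))^(2*k+1)) :=
    Real.summable_one_div_nat_pow.mpr (by omega)
  have := (summable_nat_add_iff 1).mpr h
  refine this.congr fun n => ?_
  push_cast
  ring

lemma summ_aux (k : ℕ) (hk : 1 ≤ k) (a b : ℝ) (ha : 1 ≤ a) (hb : 0 < b) :
    Summable (fun n : ℕ => 1/(a*(n:ℝ)+b)^(2*k+1)) := by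
  set c := min b 1 with hc
  have hc0 : 0 < c := lt_min hb one_pos
  have hcb : c ≤ b := min_le_left _ _
  have hc1 : c ≤ 1 := min_le_right _ _
  have hpos : ∀ n : ℕ, (0:ℝ) < a*(n:ℝ)+b := fun n => by
    have h0 : (0:ℝ) ≤ (n:ℝ) := Nat.cast_nonneg n
    nlinarith
  refine Summable.of_nonneg_of_le (f := fun n : ℕ => (1/c^(2*k+1)) * (1/((n:ℝ)+1)^(2*k+1)))
    (fun n => by have := hpos n; positivity) (fun n => ?_)
    ((summ_base k hk).mul_left _)
  have h1 : c*((n:ℝ)+1) ≤ a*(n:ℝ)+b := by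
    have : c*(n:ℝ) ≤ a*(n:ℝ) := by
      apply mul_le_mul_of_nonneg_right (le_trans hc1 ha) (Nat.cast_nonneg n)
    nlinarith
  have h2 : (0:ℝ) < c*((n:ℝ)+1) := by positivity
  have h3 : (c*((n:ℝ)+1))^(2*k+1) ≤ (a*(n:ℝ)+b)^(2*k+1) :=
    pow_le_pow_left₀ h2.le h1 _
  have h4 : (0:ℝ) < (c*((n:ℝ)+1))^(2*k+1) := by positivity
  calc 1/(a*(n:ℝ)+b)^(2*k+1) ≤ 1/(c*((n:ℝ)+1))^(2*k+1) :=
        one_div_le_one_div_of_le h4 h3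
    _ = (1/c^(2*k+1)) * (1/((n:ℝ)+1)^(2*k+1)) := by
        rw [mul_pow]; field_simp


theorem hurwitzZeta_three_quarters_odd (k : ℕ) (hk : 1 ≤ k) :
    ∑' n : ℕ, (1:ℝ) / ((n:ℝ) + 3/4) ^ (2*k+1) =
      -((2:ℝ) ^ (2*k-1) / (Nat.factorial (2*k))) * Real.pi ^ (2*k+1) * |(E2 k : ℝ)|
        + 2 ^ (2*k) * (2 ^ (2*k+1) - 1) * ∑' n : ℕ, (1:ℝ) / ((n:ℝ) + 1) ^ (2*k+1) := by
  classical
  have hk0 : k ≠ 0 := by omega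
  have sA : Summable (fun n : ℕ => 1/(4*(n:ℝ)+1)^(2*k+1)) :=
    summ_aux k hk 4 1 (by norm_num) one_pos
  have sB : Summable (fun n : ℕ => 1/(4*(n:ℝ)+3)^(2*k+1)) :=
    summ_aux k hk 4 3 (by norm_num) (by norm_num)
  have sO : Summable (fun n : ℕ => 1/(2*(n:ℝ)+1)^(2*k+1)) :=
    summ_aux k hk 2 1 (by norm_num) one_pos
  have sE : Summable (fun n : ℕ => 1/(2*(n:ℝ)+2)^(2*k+1)) :=
    summ_aux k hk 2 2 (by norm_num) (by norm_num)
  have sZ : Summable (fun n : ℕ => 1/((n:ℝ)+1)^(2*k+1)) := summ_base k hk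
  set Z := ∑' n : ℕ, (1:ℝ)/((n:ℝ)+1)^(2*k+1) with hZdef
  set A := ∑' n : ℕ, (1:ℝ)/(4*(n:ℝ)+1)^(2*k+1) with hAdef
  set B := ∑' n : ℕ, (1:ℝ)/(4*(n:ℝ)+3)^(2*k+1) with hBdef
  set O := ∑' n : ℕ, (1:ℝ)/(2*(n:ℝ)+1)^(2*k+1) with hOdef
  set Ev := ∑' n : ℕ, (1:ℝ)/(2*(n:ℝ)+2)^(2*k+1) with hEdef
  -- Z splits into odd and even parts
  have hZsplit : O + Ev = Z := by
    rw [hZdef, hOdef, hEdef]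
    have h := tsum_even_add_odd (f := fun n : ℕ => (1:ℝ)/((n:ℝ)+1)^(2*k+1))
      (sO.congr fun m => by push_cast; ring)
      (sE.congr fun m => by push_cast; ring)
    beta_reduce at h
    rw [← h]
    congr 1
    · exact tsum_congr fun m => by push_cast; ring
    · exact tsum_congr fun m => by push_cast; ring
  have hOsplit : A + B = O := by
    rw [hAdef, hBdef, hOdef]
    have h := tsum_even_add_odd (f := fun n : ℕ => (1:ℝ)/(2*(n:ℝ)+1)^(2*k+1))
      (sA.congr fun m => by push_cast; ring)
      (sB.congr fun m => by push_cast; ring)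
    beta_reduce at h
    rw [← h]
    congr 1
    · exact tsum_congr fun m => by push_cast; ring
    · exact tsum_congr fun m => by push_cast; ring
  have hEv : Ev = (1/2^(2*k+1)) * Z := by
    rw [hEdef, hZdef, ← tsum_mul_left]
    refine tsum_congr fun n => ?_
    rw [show 2*(n:ℝ)+2 = 2*((n:ℝ)+1) by ring, mul_pow]
    have h1 : ((n:ℝ)+1)^(2*k+1) ≠ 0 := by positivity
    field_simp
  -- the sine series
  have hsin := (hasSum_one_div_nat_pow_mul_sin (k := k) hk0 (x := 1/4)
    ⟨by norm_num, by norm_num⟩).tsum_eq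
  have salt : Summable (fun m : ℕ => (-1:ℝ)^m * (1/(2*(m:ℝ)+1)^(2*k+1))) := by
    refine Summable.of_abs (sO.congr fun m => ?_)
    rw [abs_mul, abs_pow, abs_neg, abs_one, one_pow, one_mul,
      abs_of_nonneg (by positivity)]
  have hsplit_sin : (∑' n : ℕ, 1/(n:ℝ)^(2*k+1) * Real.sin (2*Real.pi*(n:ℝ)*(1/4)))
      = A - B := by
    rw [hAdef, hBdef]
    have hu_even : ∀ m : ℕ, (1:ℝ)/((2*m : ℕ):ℝ)^(2*k+1) *
        Real.sin (2*Real.pi*(((2*m : ℕ)):ℝ)*(1/4)) = 0 := by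
      intro m
      rw [show 2*Real.pi*(((2*m : ℕ)):ℝ)*(1/4) = (m:ℝ)*Real.pi by push_cast; ring,
        Real.sin_nat_mul_pi, mul_zero]
    have hu_odd : ∀ m : ℕ, (1:ℝ)/((2*m+1 : ℕ):ℝ)^(2*k+1) *
        Real.sin (2*Real.pi*(((2*m+1 : ℕ)):ℝ)*(1/4))
        = (-1:ℝ)^m * (1/(2*(m:ℝ)+1)^(2*k+1)) := by
      intro m
      rw [show 2*Real.pi*(((2*m+1 : ℕ)):ℝ)*(1/4) = (m:ℝ)*Real.pi + Real.pi/2 by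
        push_cast; ring]
      rw [Real.sin_add_pi_div_two]
      have hc : Real.cos ((m:ℝ)*Real.pi) = (-1:ℝ)^m := by
        simpa using Real.cos_nat_mul_pi_sub 0 m
      rw [hc]
      push_cast
      ring
    have h := tsum_even_add_odd (f := fun n : ℕ => (1:ℝ)/(n:ℝ)^(2*k+1) *
        Real.sin (2*Real.pi*(n:ℝ)*(1/4)))
      (summable_zero.congr fun m => (hu_even m).symm)
      (salt.congr fun m => (hu_odd m).symm)
    beta_reduce at h
    rw [← h]
    have hzero : (∑' m : ℕ, (1:ℝ)/((2*m : ℕ):ℝ)^(2*k+1) *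
        Real.sin (2*Real.pi*(((2*m : ℕ)):ℝ)*(1/4))) = 0 := by
      rw [tsum_congr hu_even, tsum_zero]
    rw [hzero, zero_add, tsum_congr hu_odd]
    -- split the alternating series
    have h2 := tsum_even_add_odd (f := fun m : ℕ => (-1:ℝ)^m * (1/(2*(m:ℝ)+1)^(2*k+1)))
      (sA.congr fun m => by
        beta_reduce
        rw [show 2*((2*m:ℕ):ℝ)+1 = 4*(m:ℝ)+1 by push_cast; ring, pow_mul]
        norm_num)
      ((sB.neg).congr fun m => by
        beta_reduce
        rw [show 2*((2*m+1:ℕ):ℝ)+1 = 4*(m:ℝ)+3 by push_cast; ring, pow_succ (-1:ℝ), pow_mul (-1:ℝ)]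
        norm_num)
    beta_reduce at h2
    rw [← h2]
    have eA : (∑' m : ℕ, (-1:ℝ)^(2*m) * (1/(2*((2*m : ℕ):ℝ)+1)^(2*k+1)))
        = ∑' m : ℕ, (1:ℝ)/(4*(m:ℝ)+1)^(2*k+1) := by
      refine tsum_congr fun m => ?_
      rw [show 2*((2*m:ℕ):ℝ)+1 = 4*(m:ℝ)+1 by push_cast; ring, pow_mul]
      norm_num
    have eB : (∑' m : ℕ, (-1:ℝ)^(2*m+1) * (1/(2*((2*m+1 : ℕ):ℝ)+1)^(2*k+1)))
        = ∑' m : ℕ, -((1:ℝ)/(4*(m:ℝ)+3)^(2*k+1)) := by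
      refine tsum_congr fun m => ?_
      rw [show 2*((2*m+1:ℕ):ℝ)+1 = 4*(m:ℝ)+3 by push_cast; ring, pow_succ, pow_mul]
      norm_num
    rw [eA, eB, tsum_neg]
    ring
  have hS := hsplit_sin.symm.trans hsin
  -- convert the Bernoulli polynomial value
  have hBe : Polynomial.eval ((1:ℝ)/4)
      (Polynomial.map (algebraMap ℚ ℝ) (Polynomial.bernoulli (2*k+1)))
      = -(2*(k:ℝ)+1) * ((E2 k : ℤ) : ℝ) / 4^(2*k+1) := by
    have h1 : ((1:ℝ)/4) = algebraMap ℚ ℝ (1/4 : ℚ) := by norm_num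
    rw [h1, Polynomial.eval_map, Polynomial.eval₂_at_apply]
    have h2 := E2_eq_cB k
    rw [cB] at h2
    have h3 : Polynomial.eval (1/4 : ℚ) (Polynomial.bernoulli (2*k+1))
        = -(2*(k:ℚ)+1) * ((E2 k : ℤ) : ℚ) / 4^(2*k+1) := by
      have hne : ((2:ℚ)*(k:ℚ)+1) ≠ 0 := by positivity
      have hne4 : ((4:ℚ))^(2*k+1) ≠ 0 := by positivity
      field_simp at h2 ⊢
      push_cast at h2
      linear_combination h2
    rw [h3, eq_ratCast]
    push_cast
    ring
  rw [hBe] at hS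
  have hfac : (((2*k+1).factorial : ℝ)) = (2*(k:ℝ)+1) * ((2*k).factorial : ℝ) := by
    rw [show 2*k+1 = (2*k)+1 from rfl, Nat.factorial_succ]
    push_cast
    ring
  have hfne : ((2*k).factorial : ℝ) ≠ 0 := by positivity
  have hS' : A - B = (-1:ℝ)^k * Real.pi^(2*k+1) * ((E2 k : ℤ) : ℝ) /
      (4 * ((2*k).factorial : ℝ) * 2^(2*k)) := by
    rw [hS, hfac]
    have h1 : ((2:ℝ)*(k:ℝ)+1) ≠ 0 := by positivity
    rw [mul_pow, pow_succ (-1:ℝ) k,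
      show (4:ℝ)^(2*k+1) = ((2:ℝ)^(2*k))^2*4 by
        rw [show (4:ℝ) = 2^2 by norm_num, ← pow_mul, ← pow_mul]
        congr 1
        ring,
      show (2:ℝ)^(2*k+1) = 2^(2*k)*2 from pow_succ 2 (2*k)]
    have h2 : (2:ℝ)^(2*k) ≠ 0 := by positivity
    field_simp
  have hABnonneg : (0:ℝ) ≤ A - B := by
    rw [hAdef, hBdef]
    refine sub_nonneg.mpr (sB.tsum_le_tsum (fun n => ?_) sA)
    have hp1 : (0:ℝ) < 4*(n:ℝ)+1 := by positivity
    have hp3 : (4*(n:ℝ)+1)^(2*k+1) ≤ (4*(n:ℝ)+3)^(2*k+1) := by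
      apply pow_le_pow_left₀ hp1.le (by linarith)
    exact one_div_le_one_div_of_le (by positivity) hp3
  have hsign : (0:ℝ) ≤ (-1:ℝ)^k * ((E2 k : ℤ) : ℝ) := by
    have hpi : Real.pi^(2*k+1) ≠ 0 := by positivity
    have h2 : (2:ℝ)^(2*k) ≠ 0 := by positivity
    have heq : (-1:ℝ)^k * ((E2 k : ℤ) : ℝ) =
        (A - B) * (4 * ((2*k).factorial : ℝ) * 2^(2*k)) / Real.pi^(2*k+1) := by
      rw [hS']
      field_simp
    rw [heq]
    exact div_nonneg (mul_nonneg hABnonneg (by positivity)) (by positivity)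
  have habs : |((E2 k : ℤ) : ℝ)| = (-1:ℝ)^k * ((E2 k : ℤ) : ℝ) := by
    rcases Nat.even_or_odd k with he | ho
    · rw [he.neg_one_pow] at hsign ⊢
      rw [one_mul] at hsign ⊢
      exact abs_of_nonneg hsign
    · rw [ho.neg_one_pow] at hsign ⊢
      rw [neg_one_mul] at hsign ⊢
      exact abs_of_nonpos (by linarith)
  have hLHS : (∑' n : ℕ, (1:ℝ)/((n:ℝ)+3/4)^(2*k+1)) = 4^(2*k+1) * B := by
    rw [hBdef, ← tsum_mul_left]
    refine tsum_congr fun n => ?_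
    rw [show (n:ℝ)+3/4 = (4*(n:ℝ)+3)/4 by ring, div_pow]
    have hp : (4*(n:ℝ)+3)^(2*k+1) ≠ 0 := by positivity
    field_simp
  rw [hLHS, habs]
  -- final computation
  have hBval : B = (Z - (1/(2*2^(2*k)))*Z
      - ((-1:ℝ)^k * Real.pi^(2*k+1) * ((E2 k : ℤ) : ℝ) /
        (4 * ((2*k).factorial : ℝ) * 2^(2*k))))/2 := by
    have hO2 : O = Z - (1/(2*2^(2*k)))*Z := by
      have h5 : O = Z - Ev := by linarith [hZsplit]
      rw [h5, hEv, show (2:ℝ)^(2*k+1) = 2^(2*k)*2 from pow_succ 2 (2*k)]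
      ring
    have hB2 : 2*B = O - (A - B) := by linarith [hOsplit]
    rw [hS'] at hB2
    rw [hO2] at hB2
    linarith
  rw [hBval,
    show (4:ℝ)^(2*k+1) = ((2:ℝ)^(2*k))^2*4 by
      rw [show (4:ℝ) = 2^2 by norm_num, ← pow_mul, ← pow_mul]
      congr 1
      ring,
    show (2:ℝ)^(2*k+1) = 2^(2*k)*2 from pow_succ 2 (2*k),
    show (2:ℝ)^(2*k-1) = 2^(2*k)/2 by
      rw [eq_div_iff (two_ne_zero), ← pow_succ]
      congr 1
      omega]
  have h2 : (2:ℝ)^(2*k) ≠ 0 := by positivity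
  field_simp
  ring
end

section
/- ζ(3, 3/4) = 28·ζ(3) − π³, where ζ(s,a) is the Hurwitz zeta function. -/
open Real

private lemma aux_hZ : Summable (fun n : ℕ => (1:ℝ) / ((n:ℝ) + 1) ^ 3) := by
  have h := (summable_nat_add_iff (f := fun n : ℕ => (1:ℝ) / (n:ℝ) ^ 3) 1).mpr
    (Real.summable_one_div_nat_pow.mpr (by norm_num))
  refine h.congr fun n => ?_
  push_cast
  ring_nf

private lemma aux_cmp {g : ℕ → ℝ} (hg : ∀ n : ℕ, 0 ≤ g n)
    (hle : ∀ n : ℕ, g n ≤ (1:ℝ) / ((n:ℝ) + 1) ^ 3) : Summable g :=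
  Summable.of_nonneg_of_le hg hle aux_hZ

private lemma aux_le (n : ℕ) (a : ℝ) (ha : (n:ℝ) + 1 ≤ a) :
    (1:ℝ) / a ^ 3 ≤ 1 / ((n:ℝ) + 1) ^ 3 := by
  have h0 : (0:ℝ) < (n:ℝ) + 1 := by positivity
  gcongr

private lemma aux_hO : Summable (fun k : ℕ => (1:ℝ) / (2*(k:ℝ) + 1) ^ 3) :=
  aux_cmp (fun n => by positivity)
    (fun n => aux_le n _ (by linarith [Nat.cast_nonneg (α := ℝ) n]))

private lemma aux_hP : Summable (fun m : ℕ => (1:ℝ) / (4*(m:ℝ) + 1) ^ 3) :=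
  aux_cmp (fun n => by positivity)
    (fun n => aux_le n _ (by linarith [Nat.cast_nonneg (α := ℝ) n]))

private lemma aux_hQ : Summable (fun m : ℕ => (1:ℝ) / (4*(m:ℝ) + 3) ^ 3) :=
  aux_cmp (fun n => by positivity)
    (fun n => aux_le n _ (by linarith [Nat.cast_nonneg (α := ℝ) n]))

private lemma aux_hJ : Summable (fun k : ℕ => (-1:ℝ) ^ k * ((1:ℝ) / (2*(k:ℝ) + 1) ^ 3)) := by
  refine Summable.of_abs ?_
  refine aux_hO.congr fun k => ?_
  rw [abs_mul, abs_pow, abs_neg, abs_one, one_pow, one_mul,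
    abs_of_nonneg (by positivity)]

private lemma aux_even_pow (m : ℕ) : ((-1:ℝ)) ^ (2*m) = 1 := by
  simp [pow_mul]

private lemma aux_odd_pow (m : ℕ) : ((-1:ℝ)) ^ (2*m+1) = -1 := by
  simp [pow_succ, pow_mul]

/-- sin (π * (2k+1) / 2) = (-1)^k -/
private lemma aux_sin_odd (k : ℕ) : Real.sin (π * (2*(k:ℝ)+1) / 2) = (-1) ^ k := by
  have h : π * (2*(k:ℝ)+1) / 2 = (k:ℝ) * π + π / 2 := by ring
  rw [h, Real.sin_add_pi_div_two]
  have := Real.cos_nat_mul_pi_sub 0 k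
  simpa using this

theorem hurwitzZeta_three_three_quarters :
    ∑' n : ℕ, (1:ℝ) / ((n:ℝ) + 3/4) ^ 3 =
      28 * (∑' n : ℕ, (1:ℝ) / ((n:ℝ) + 1) ^ 3) - Real.pi ^ 3 := by
  set Z : ℝ := ∑' n : ℕ, (1:ℝ) / ((n:ℝ) + 1) ^ 3 with hZdef
  set O : ℝ := ∑' k : ℕ, (1:ℝ) / (2*(k:ℝ) + 1) ^ 3 with hOdef
  set P : ℝ := ∑' m : ℕ, (1:ℝ) / (4*(m:ℝ) + 1) ^ 3 with hPdef
  set Q : ℝ := ∑' m : ℕ, (1:ℝ) / (4*(m:ℝ) + 3) ^ 3 with hQdef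
  -- e1 : O + Z/8 = Z
  have e1 : O + (1/8) * Z = Z := by
    have he : Summable (fun k : ℕ => (1:ℝ) / ((↑(2*k):ℝ) + 1) ^ 3) :=
      aux_hO.congr (fun k => by push_cast; ring_nf)
    have ho : Summable (fun k : ℕ => (1:ℝ) / ((↑(2*k+1):ℝ) + 1) ^ 3) :=
      aux_cmp (fun n => by positivity)
        (fun n => aux_le n _ (by push_cast; linarith [Nat.cast_nonneg (α := ℝ) n]))
    have key := tsum_even_add_odd (f := fun n : ℕ => (1:ℝ) / ((n:ℝ) + 1) ^ 3) he ho
    have hOev : ∑' k : ℕ, (fun n : ℕ => (1:ℝ) / ((n:ℝ) + 1) ^ 3) (2*k) = O := by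
      rw [hOdef]; exact tsum_congr fun k => by simp only []; push_cast; ring_nf
    have hZod : ∑' k : ℕ, (fun n : ℕ => (1:ℝ) / ((n:ℝ) + 1) ^ 3) (2*k+1) = (1/8) * Z := by
      rw [hZdef, ← tsum_mul_left]
      refine tsum_congr fun k => ?_
      simp only []
      push_cast
      rw [show ((2:ℝ)*k+1)+1 = 2*((k:ℝ)+1) by ring, mul_pow]
      norm_num
      ring
    rw [← hOev, ← hZod, hZdef]
    exact key
  -- e2 : P + Q = O
  have e2 : P + Q = O := by
    have he : Summable (fun m : ℕ => (fun k : ℕ => (1:ℝ) / (2*(k:ℝ) + 1) ^ 3) (2*m)) :=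
      aux_hP.congr (fun m => by simp only []; push_cast; ring_nf)
    have ho : Summable (fun m : ℕ => (fun k : ℕ => (1:ℝ) / (2*(k:ℝ) + 1) ^ 3) (2*m+1)) :=
      aux_hQ.congr (fun m => by simp only []; push_cast; ring_nf)
    have key := tsum_even_add_odd (f := fun k : ℕ => (1:ℝ) / (2*(k:ℝ) + 1) ^ 3) he ho
    have hPe : ∑' m : ℕ, (fun k : ℕ => (1:ℝ) / (2*(k:ℝ) + 1) ^ 3) (2*m) = P := by
      rw [hPdef]; exact tsum_congr fun m => by simp only []; push_cast; ring_nf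
    have hQo : ∑' m : ℕ, (fun k : ℕ => (1:ℝ) / (2*(k:ℝ) + 1) ^ 3) (2*m+1) = Q := by
      rw [hQdef]; exact tsum_congr fun m => by simp only []; push_cast; ring_nf
    rw [← hPe, ← hQo, hOdef]
    exact key
  -- e3 : P - Q = π^3/32
  have e3 : P - Q = π ^ 3 / 32 := by
    have hbeta := hasSum_L_function_mod_four_eval_three
    set h : ℕ → ℝ := fun n : ℕ => (1:ℝ) / (n:ℝ) ^ 3 * Real.sin (π * n / 2) with hh
    have heven : ∀ k : ℕ, h (2*k) = 0 := by
      intro k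
      have hx : π * ((2*k : ℕ):ℝ) / 2 = (k:ℝ) * π := by push_cast; ring
      simp only [hh]
      rw [hx, Real.sin_nat_mul_pi, mul_zero]
    have hodd : ∀ k : ℕ, h (2*k+1) = (-1) ^ k * ((1:ℝ) / (2*(k:ℝ) + 1) ^ 3) := by
      intro k
      have h1 : ((2*k+1 : ℕ):ℝ) = 2*(k:ℝ)+1 := by push_cast; ring
      simp only [hh]
      rw [h1, aux_sin_odd]
      ring
    have hsume : Summable (fun k : ℕ => h (2*k)) :=
      summable_zero.congr fun k => (heven k).symm
    have hsumo : Summable (fun k : ℕ => h (2*k+1)) :=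
      aux_hJ.congr fun k => (hodd k).symm
    have key := tsum_even_add_odd (f := h) hsume hsumo
    rw [hbeta.tsum_eq] at key
    have hzero : ∑' k : ℕ, h (2*k) = 0 := by
      rw [tsum_congr heven, tsum_zero]
    have hJval : ∑' k : ℕ, (-1:ℝ) ^ k * ((1:ℝ) / (2*(k:ℝ) + 1) ^ 3) = π ^ 3 / 32 := by
      rw [← tsum_congr hodd]
      linarith [key, hzero]
    -- now split the alternating sum by parity
    set j : ℕ → ℝ := fun k : ℕ => (-1:ℝ) ^ k * ((1:ℝ) / (2*(k:ℝ) + 1) ^ 3) with hj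
    have he2 : Summable (fun m : ℕ => j (2*m)) :=
      aux_hP.congr fun m => by
        simp only [hj, aux_even_pow, one_mul]
        push_cast; ring_nf
    have ho2 : Summable (fun m : ℕ => j (2*m+1)) :=
      aux_hQ.neg.congr fun m => by
        simp only [hj, aux_odd_pow]
        push_cast; ring_nf
    have key2 := tsum_even_add_odd (f := j) he2 ho2
    rw [hJval] at key2
    have hPe : ∑' m : ℕ, j (2*m) = P := by
      rw [hPdef]
      refine tsum_congr fun m => ?_
      simp only [hj, aux_even_pow, one_mul]
      push_cast; ring_nf
    have hQo : ∑' m : ℕ, j (2*m+1) = -Q := by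
      rw [hQdef, ← tsum_neg]
      refine tsum_congr fun m => ?_
      simp only [hj, aux_odd_pow]
      push_cast; ring_nf
    rw [hPe, hQo] at key2
    linarith
  -- final: LHS = 64 * Q
  have hB : ∑' n : ℕ, (1:ℝ) / ((n:ℝ) + 3/4) ^ 3 = 64 * Q := by
    rw [hQdef, ← tsum_mul_left]
    refine tsum_congr fun n => ?_
    rw [show ((n:ℝ) + 3/4) = (4*(n:ℝ)+3)/4 by ring, div_pow]
    rw [div_div_eq_mul_div, one_mul, mul_one_div]
    norm_num
  rw [hB]
  linarith
end

section
/- Let (b_n)_{n≥1} be the paperfolding sequence defined by b_{2n} = b_n, b_{4n+1} = 0, b_{4n+3} = 1. For all complex s with Re(s) > 1, (1 − 2^(−s))·∑_{n≥1} b_n/n^s = 4^(−s)·ζ(s, 3/4), where ζ(s,a) is the Hurwitz zeta function. -/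
lemma pf_two_mul (k : ℕ) : pf (2*k) = pf k := by
  cases k with
  | zero => rfl
  | succ n =>
    show pf (2*n+1+1) = pf (n+1)
    rw [pf]
    have h1 : (2*n+1+1) % 2 = 0 := by omega
    have h2 : (2*n+1+1) / 2 = n + 1 := by omega
    simp [h1, h2]

lemma pf_4k1 (k : ℕ) : pf (4*k+1) = 0 := by
  show pf (4*k+1) = 0
  rw [show 4*k+1 = (4*k)+1 from rfl, pf]
  have h1 : (4*k+1) % 2 ≠ 0 := by omega
  have h2 : (4*k+1) % 4 = 1 := by omega
  simp [h1, h2]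

lemma pf_4k3 (k : ℕ) : pf (4*k+3) = 1 := by
  rw [show 4*k+3 = (4*k+2)+1 from rfl, pf]
  have h1 : (4*k+3) % 2 ≠ 0 := by omega
  have h2 : (4*k+3) % 4 ≠ 1 := by omega
  simp [h1, h2]

lemma pf_le_one (n : ℕ) : pf n ≤ 1 := by
  induction n using Nat.strong_induction_on with
  | _ n ih =>
    match n with
    | 0 => simp [pf]
    | n+1 =>
      rw [pf]
      split
      · exact ih _ (Nat.div_lt_self (Nat.succ_pos n) one_lt_two)
      · split <;> simp

theorem paperfolding_dirichlet_eq_hurwitz (s : ℂ) (hs : 1 < s.re) :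
    (1 - (2:ℂ) ^ (-s)) * ∑' n : ℕ, (pf (n+1) : ℂ) / ((n:ℂ) + 1) ^ s =
      (4:ℂ) ^ (-s) * ∑' n : ℕ, 1 / ((n:ℂ) + 3/4) ^ s := by
  have hs0 : s ≠ 0 := by
    intro h; rw [h] at hs; simp at hs; linarith
  set g : ℕ → ℂ := fun n => (pf n : ℂ) / (n : ℂ) ^ s with hg_def
  have hsum1 : Summable fun n : ℕ => 1 / (n:ℂ)^s := Complex.summable_one_div_nat_cpow.mpr hs
  have hg : Summable g := by
    apply Summable.of_norm_bounded hsum1.norm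
    intro n
    simp only [hg_def, norm_div, norm_one, Complex.norm_natCast]
    gcongr
    exact_mod_cast pf_le_one n
  have h0 : g 0 = 0 := by simp [hg_def, pf]
  have key : ∑' n : ℕ, (pf (n+1) : ℂ) / ((n:ℂ) + 1) ^ s = ∑' n, g n := by
    rw [Summable.tsum_eq_zero_add hg, h0, zero_add]
    apply tsum_congr; intro n
    simp only [hg_def]
    push_cast
    ring_nf
  have heven : Summable fun k => g (2*k) := hg.comp_injective (i := fun k => 2*k) (fun a b h => by have h' : 2*a = 2*b := h; omega)
  have hodd : Summable fun k => g (2*k+1) := hg.comp_injective (i := fun k => 2*k+1) (fun a b h => by have h' : 2*a+1 = 2*b+1 := h; omega)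
  have heq_even : ∀ k, g (2*k) = (2:ℂ)^(-s) * g k := by
    intro k
    simp only [hg_def, pf_two_mul]
    have h2k : ((2*k:ℕ):ℂ) ^ s = (2:ℂ)^s * (k:ℂ)^s := by
      have h := Complex.mul_cpow_ofReal_nonneg (by norm_num : (0:ℝ) ≤ 2) (Nat.cast_nonneg k) s
      push_cast at h ⊢
      exact h
    rw [h2k, Complex.cpow_neg, div_eq_mul_inv, mul_inv, div_eq_mul_inv]
    ring
  have even_eq : ∑' k, g (2*k) = (2:ℂ)^(-s) * ∑' k, g k := by
    rw [tsum_congr heq_even, tsum_mul_left]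
  have hodd2a : Summable fun j => g (2*(2*j)+1) := hg.comp_injective (i := fun j => 2*(2*j)+1) (fun a b h => by have h' : 2*(2*a)+1 = 2*(2*b)+1 := h; omega)
  have hodd2b : Summable fun j => g (2*(2*j+1)+1) := hg.comp_injective (i := fun j => 2*(2*j+1)+1) (fun a b h => by have h' : 2*(2*a+1)+1 = 2*(2*b+1)+1 := h; omega)
  have odd_eq : ∑' k, g (2*k+1) = ∑' j : ℕ, 1 / ((4*j+3:ℕ):ℂ) ^ s := by
    rw [← tsum_even_add_odd (f := fun k => g (2*k+1)) hodd2a hodd2b]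
    have hz : ∀ j : ℕ, g (2*(2*j)+1) = 0 := by
      intro j
      have e : 2*(2*j)+1 = 4*j+1 := by ring
      simp [hg_def, e, pf_4k1]
    rw [tsum_congr hz, tsum_zero, zero_add]
    apply tsum_congr; intro j
    have e : 2*(2*j+1)+1 = 4*j+3 := by ring
    simp [hg_def, e, pf_4k3]
  have hF := tsum_even_add_odd heven hodd
  have hrhs : ∑' j:ℕ, 1/((4*j+3:ℕ):ℂ)^s = (4:ℂ)^(-s) * ∑' n:ℕ, 1/((n:ℂ)+3/4)^s := by
    rw [← tsum_mul_left]
    apply tsum_congr; intro j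
    have h4 := Complex.mul_cpow_ofReal_nonneg (by norm_num : (0:ℝ) ≤ 4)
      (by positivity : (0:ℝ) ≤ (j:ℝ)+3/4) s
    have e : ((4:ℝ):ℂ) * (((j:ℝ)+3/4 : ℝ):ℂ) = ((4*j+3:ℕ):ℂ) := by push_cast; ring
    rw [e] at h4
    rw [h4, Complex.cpow_neg]
    push_cast
    rw [one_div, mul_inv]
    ring
  rw [key, ← hrhs]
  have hF' := hF
  rw [even_eq] at hF'
  linear_combination -hF' + odd_eq
end

section
/- Let (t_n)_{n≥0} be the Thue–Morse sequence. For all complex s with Re(s) > 1, ∑_{n≥1} [ (2^s + 1)·t_{n−1} + (2^s − 1)·t_n ] / n^s = 2^s·ζ(s). -/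
lemma tm_two_mul (m : ℕ) : tm (2*m) = tm m := by
  cases m with
  | zero => rfl
  | succ k =>
    show tm (2*k+1+1) = tm (k+1)
    rw [tm]
    have h1 : (2*k+1+1) % 2 = 0 := by omega
    have h2 : (2*k+1+1) / 2 = k+1 := by omega
    simp [h1, h2]

lemma tm_two_mul_add_one (m : ℕ) : tm (2*m+1) = 1 - tm m := by
  show tm (2*m+1) = 1 - tm m
  rw [tm]
  have h1 : ¬ (2*m+1) % 2 = 0 := by omega
  have h2 : (2*m+1) / 2 = m := by omega
  simp [h1, h2]

lemma tm_le_one : ∀ n, tm n ≤ 1 := by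
  intro n
  induction n using Nat.strong_induction_on with
  | _ n ih =>
    match n with
    | 0 => rw [tm]; exact Nat.zero_le 1
    | n+1 =>
      rw [tm]
      split
      · exact ih _ (Nat.div_lt_self (Nat.succ_pos n) one_lt_two)
      · omega

lemma summable_div_cpow {s : ℂ} (hs : 1 < s.re) (c : ℕ → ℂ) (hc : ∀ n, ‖c n‖ ≤ 1)
    (a : ℕ → ℕ) (ha : ∀ n, n + 1 ≤ a n) :
    Summable (fun n : ℕ => c n / (a n : ℂ) ^ s) := by
  have hσ : (0:ℝ) < s.re := lt_trans one_pos hs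
  have hbase : Summable (fun n : ℕ => 1 / ((n:ℝ)+1) ^ s.re) := by
    have h1 := Real.summable_one_div_nat_rpow.mpr hs
    have h2 := (summable_nat_add_iff 1).mpr h1
    refine h2.congr fun n => ?_
    push_cast
    ring_nf
  refine Summable.of_norm_bounded hbase fun n => ?_
  have hapos : (0:ℝ) < (a n : ℝ) := by
    have := ha n; exact_mod_cast (by omega : 0 < a n)
  have hnorm : ‖((a n : ℕ) : ℂ) ^ s‖ = (a n : ℝ) ^ s.re := by
    rw [show ((a n : ℕ) : ℂ) = (((a n : ℝ)) : ℂ) by push_cast; ring,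
      Complex.norm_cpow_eq_rpow_re_of_pos hapos]
  rw [norm_div, hnorm]
  have hle : ((n:ℝ)+1) ^ s.re ≤ (a n : ℝ) ^ s.re := by
    apply Real.rpow_le_rpow (by positivity) _ (le_of_lt hσ)
    have := ha n
    push_cast
    exact_mod_cast this
  exact div_le_div₀ (zero_le_one) (hc n) (by positivity) hle

lemma cpow_double (s : ℂ) (x : ℝ) (hx : 0 ≤ x) :
    ((2 * x : ℝ) : ℂ) ^ s = (2:ℂ) ^ s * ((x : ℝ) : ℂ) ^ s := by
  rw [Complex.ofReal_mul, Complex.mul_cpow_ofReal_nonneg (by norm_num) hx]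
  norm_num

section main
variable {s : ℂ}

lemma hZsum (hs : 1 < s.re) : Summable (fun n : ℕ => 1 / ((n:ℂ)+1) ^ s) :=
  (summable_div_cpow hs (fun _ => 1) (fun _ => by simp) (fun n => n+1)
    (fun _ => le_refl _)).congr (fun n => by norm_cast)

lemma tm_norm_le (n : ℕ) : ‖((tm n : ℕ) : ℂ)‖ ≤ 1 := by
  rcases Nat.le_one_iff_eq_zero_or_eq_one.mp (tm_le_one n) with h | h <;> simp [h]

lemma tm_norm_le' (n : ℕ) : ‖1 - ((tm n : ℕ) : ℂ)‖ ≤ 1 := by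
  rcases Nat.le_one_iff_eq_zero_or_eq_one.mp (tm_le_one n) with h | h <;> simp [h]

lemma hSsum (hs : 1 < s.re) : Summable (fun n : ℕ => (tm n : ℂ) / ((n:ℂ)+1) ^ s) :=
  (summable_div_cpow hs (fun n => (tm n : ℂ)) tm_norm_le (fun n => n+1)
    (fun _ => le_refl _)).congr (fun n => by norm_cast)

lemma hTsum (hs : 1 < s.re) : Summable (fun n : ℕ => (tm (n+1) : ℂ) / ((n:ℂ)+1) ^ s) :=
  (summable_div_cpow hs (fun n => (tm (n+1) : ℂ)) (fun n => tm_norm_le (n+1)) (fun n => n+1)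
    (fun _ => le_refl _)).congr (fun n => by norm_cast)

lemma hOsum (hs : 1 < s.re) : Summable (fun n : ℕ => 1 / (2*(n:ℂ)+1) ^ s) :=
  (summable_div_cpow hs (fun _ => 1) (fun _ => by simp) (fun n => 2*n+1)
    (fun n => by simp; omega)).congr (fun n => by norm_cast)

lemma hSOsum (hs : 1 < s.re) : Summable (fun n : ℕ => (tm n : ℂ) / (2*(n:ℂ)+1) ^ s) :=
  (summable_div_cpow hs (fun n => (tm n : ℂ)) tm_norm_le (fun n => 2*n+1)
    (fun n => by simp; omega)).congr (fun n => by norm_cast)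

lemma hSOsum' (hs : 1 < s.re) : Summable (fun n : ℕ => (1 - (tm n : ℂ)) / (2*(n:ℂ)+1) ^ s) :=
  (summable_div_cpow hs (fun n => 1 - (tm n : ℂ)) tm_norm_le' (fun n => 2*n+1)
    (fun n => by simp; omega)).congr (fun n => by norm_cast)

end main

section splits
variable {s : ℂ}

lemma splitZ (hs : 1 < s.re) :
    ∑' n : ℕ, 1 / ((n:ℂ)+1) ^ s =
      (∑' n : ℕ, 1 / (2*(n:ℂ)+1) ^ s) + ((2:ℂ)^s)⁻¹ * ∑' n : ℕ, 1 / ((n:ℂ)+1) ^ s := by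
  have heq_e : ∀ k : ℕ, (fun n : ℕ => 1 / ((n:ℂ)+1) ^ s) (2*k) = 1 / (2*(k:ℂ)+1) ^ s := by
    intro k; norm_cast
  have heq_o : ∀ k : ℕ, (fun n : ℕ => 1 / ((n:ℂ)+1) ^ s) (2*k+1)
      = ((2:ℂ)^s)⁻¹ * (1 / ((k:ℂ)+1) ^ s) := by
    intro k
    show 1 / (((2*k+1:ℕ):ℂ)+1) ^ s = _
    have hb : ((2*k+1:ℕ):ℂ)+1 = ((2*((k:ℝ)+1) : ℝ) : ℂ) := by push_cast; ring
    have hb' : (((k:ℝ)+1 : ℝ) : ℂ) = (k:ℂ)+1 := by push_cast; ring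
    rw [hb, cpow_double s _ (by positivity), hb']
    ring
  have he : Summable (fun k : ℕ => (fun n : ℕ => 1 / ((n:ℂ)+1) ^ s) (2*k)) :=
    (hOsum hs).congr fun k => (heq_e k).symm
  have ho : Summable (fun k : ℕ => (fun n : ℕ => 1 / ((n:ℂ)+1) ^ s) (2*k+1)) :=
    ((hZsum hs).mul_left _).congr fun k => (heq_o k).symm
  have h := tsum_even_add_odd (f := fun n : ℕ => 1 / ((n:ℂ)+1) ^ s) he ho
  rw [tsum_congr heq_e, tsum_congr heq_o, tsum_mul_left] at h
  exact h.symm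

lemma splitT (hs : 1 < s.re) :
    ∑' n : ℕ, (tm (n+1) : ℂ) / ((n:ℂ)+1) ^ s =
      (∑' n : ℕ, 1 / (2*(n:ℂ)+1) ^ s) - (∑' n : ℕ, (tm n : ℂ) / (2*(n:ℂ)+1) ^ s)
        + ((2:ℂ)^s)⁻¹ * ∑' n : ℕ, (tm (n+1) : ℂ) / ((n:ℂ)+1) ^ s := by
  have heq_e : ∀ k : ℕ, (fun n : ℕ => (tm (n+1) : ℂ) / ((n:ℂ)+1) ^ s) (2*k)
      = 1 / (2*(k:ℂ)+1) ^ s - (tm k : ℂ) / (2*(k:ℂ)+1) ^ s := by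
    intro k
    show ((tm (2*k+1) : ℕ) : ℂ) / (((2*k:ℕ):ℂ)+1) ^ s = _
    rw [tm_two_mul_add_one, Nat.cast_sub (tm_le_one k)]
    push_cast
    ring
  have heq_o : ∀ k : ℕ, (fun n : ℕ => (tm (n+1) : ℂ) / ((n:ℂ)+1) ^ s) (2*k+1)
      = ((2:ℂ)^s)⁻¹ * ((tm (k+1) : ℂ) / ((k:ℂ)+1) ^ s) := by
    intro k
    show ((tm (2*k+1+1) : ℕ) : ℂ) / (((2*k+1:ℕ):ℂ)+1) ^ s = _
    have htv : tm (2*k+1+1) = tm (k+1) := by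
      have := tm_two_mul (k+1); rw [show 2*(k+1) = 2*k+1+1 by ring] at this; exact this
    have hb : ((2*k+1:ℕ):ℂ)+1 = ((2*((k:ℝ)+1) : ℝ) : ℂ) := by push_cast; ring
    have hb' : (((k:ℝ)+1 : ℝ) : ℂ) = (k:ℂ)+1 := by push_cast; ring
    rw [htv, hb, cpow_double s _ (by positivity), hb']
    ring
  have he : Summable (fun k : ℕ => (fun n : ℕ => (tm (n+1) : ℂ) / ((n:ℂ)+1) ^ s) (2*k)) :=
    ((hOsum hs).sub (hSOsum hs)).congr fun k => (heq_e k).symm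
  have ho : Summable (fun k : ℕ => (fun n : ℕ => (tm (n+1) : ℂ) / ((n:ℂ)+1) ^ s) (2*k+1)) :=
    ((hTsum hs).mul_left _).congr fun k => (heq_o k).symm
  have h := tsum_even_add_odd (f := fun n : ℕ => (tm (n+1) : ℂ) / ((n:ℂ)+1) ^ s) he ho
  rw [tsum_congr heq_e, tsum_congr heq_o, tsum_mul_left,
    Summable.tsum_sub (hOsum hs) (hSOsum hs)] at h
  exact h.symm

lemma splitS (hs : 1 < s.re) :
    ∑' n : ℕ, (tm n : ℂ) / ((n:ℂ)+1) ^ s =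
      (∑' n : ℕ, (tm n : ℂ) / (2*(n:ℂ)+1) ^ s)
        + ((2:ℂ)^s)⁻¹ * ((∑' n : ℕ, 1 / ((n:ℂ)+1) ^ s) - ∑' n : ℕ, (tm n : ℂ) / ((n:ℂ)+1) ^ s) := by
  have heq_e : ∀ k : ℕ, (fun n : ℕ => (tm n : ℂ) / ((n:ℂ)+1) ^ s) (2*k)
      = (tm k : ℂ) / (2*(k:ℂ)+1) ^ s := by
    intro k
    show ((tm (2*k) : ℕ) : ℂ) / (((2*k:ℕ):ℂ)+1) ^ s = _
    rw [tm_two_mul]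
    norm_cast
  have heq_o : ∀ k : ℕ, (fun n : ℕ => (tm n : ℂ) / ((n:ℂ)+1) ^ s) (2*k+1)
      = ((2:ℂ)^s)⁻¹ * (1 / ((k:ℂ)+1) ^ s - (tm k : ℂ) / ((k:ℂ)+1) ^ s) := by
    intro k
    show ((tm (2*k+1) : ℕ) : ℂ) / (((2*k+1:ℕ):ℂ)+1) ^ s = _
    rw [tm_two_mul_add_one, Nat.cast_sub (tm_le_one k)]
    have hb : ((2*k+1:ℕ):ℂ)+1 = ((2*((k:ℝ)+1) : ℝ) : ℂ) := by push_cast; ring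
    have hb' : (((k:ℝ)+1 : ℝ) : ℂ) = (k:ℂ)+1 := by push_cast; ring
    rw [hb, cpow_double s _ (by positivity), hb']
    push_cast
    ring
  have he : Summable (fun k : ℕ => (fun n : ℕ => (tm n : ℂ) / ((n:ℂ)+1) ^ s) (2*k)) :=
    (hSOsum hs).congr fun k => (heq_e k).symm
  have ho : Summable (fun k : ℕ => (fun n : ℕ => (tm n : ℂ) / ((n:ℂ)+1) ^ s) (2*k+1)) :=
    (((hZsum hs).sub (hSsum hs)).mul_left _).congr fun k => (heq_o k).symm
  have h := tsum_even_add_odd (f := fun n : ℕ => (tm n : ℂ) / ((n:ℂ)+1) ^ s) he ho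
  rw [tsum_congr heq_e, tsum_congr heq_o, tsum_mul_left,
    Summable.tsum_sub (hZsum hs) (hSsum hs)] at h
  exact h.symm

end splits

theorem thue_morse_dirichlet (s : ℂ) (hs : 1 < s.re) :
    ∑' n : ℕ,
        (((2:ℂ) ^ s + 1) * (tm n : ℂ) + ((2:ℂ) ^ s - 1) * (tm (n+1) : ℂ))
          / ((n:ℂ) + 1) ^ s =
      (2:ℂ) ^ s * riemannZeta s := by
  have hterm : ∀ n : ℕ,
      (((2:ℂ) ^ s + 1) * (tm n : ℂ) + ((2:ℂ) ^ s - 1) * (tm (n+1) : ℂ)) / ((n:ℂ) + 1) ^ s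
        = ((2:ℂ)^s + 1) * ((tm n : ℂ) / ((n:ℂ)+1) ^ s)
          + ((2:ℂ)^s - 1) * ((tm (n+1) : ℂ) / ((n:ℂ)+1) ^ s) := by
    intro n; rw [add_div, mul_div_assoc, mul_div_assoc]
  rw [tsum_congr hterm,
    Summable.tsum_add ((hSsum hs).mul_left _) ((hTsum hs).mul_left _), tsum_mul_left, tsum_mul_left,
    zeta_eq_tsum_one_div_nat_add_one_cpow hs]
  have hc0 : (2:ℂ)^s ≠ 0 := by
    rw [Complex.cpow_def_of_ne_zero two_ne_zero]; exact Complex.exp_ne_zero _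
  have hcc : (2:ℂ)^s * ((2:ℂ)^s)⁻¹ = 1 := mul_inv_cancel₀ hc0
  have hZ := splitZ hs
  have hT := splitT hs
  have hS := splitS hs
  set Z := ∑' n : ℕ, 1 / ((n:ℂ)+1) ^ s
  set S := ∑' n : ℕ, (tm n : ℂ) / ((n:ℂ)+1) ^ s
  set T := ∑' n : ℕ, (tm (n+1) : ℂ) / ((n:ℂ)+1) ^ s
  set O := ∑' n : ℕ, 1 / (2*(n:ℂ)+1) ^ s
  set SO := ∑' n : ℕ, (tm n : ℂ) / (2*(n:ℂ)+1) ^ s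
  linear_combination ((2:ℂ)^s) * hT + ((2:ℂ)^s) * hS - ((2:ℂ)^s) * hZ + (T - S) * hcc
end

section
/- ζ(2, 3/4) = π² − 8C, where ζ(s,a) is the Hurwitz zeta function and C = ∑_{n≥0} (−1)^n/(2n+1)² is Catalan's constant. -/
open Real

private lemma base_summable : Summable (fun n : ℕ => (1:ℝ) / ((n:ℝ) + 1) ^ 2) := by
  have := hasSum_zeta_two.summable
  have h := (summable_nat_add_iff 1).mpr this
  refine h.congr fun n => ?_
  push_cast
  ring_nf

private lemma summable_shift (a b : ℝ) (ha : 1 ≤ a) (hb : 1 ≤ b) :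
    Summable (fun n : ℕ => (1:ℝ) / (a * (n:ℝ) + b) ^ 2) := by
  refine Summable.of_nonneg_of_le (fun n => by positivity) (fun n => ?_) base_summable
  have hn : (0:ℝ) ≤ (n:ℝ) := n.cast_nonneg
  have h1 : (0:ℝ) < (n:ℝ) + 1 := by linarith
  have h2 : (n:ℝ) + 1 ≤ a * n + b := by nlinarith
  have h3 := pow_le_pow_left₀ (le_of_lt h1) h2 2
  exact one_div_le_one_div_of_le (by positivity) h3

private lemma odd_sum : ∑' k : ℕ, (1:ℝ) / (2 * (k:ℝ) + 1) ^ 2 = π ^ 2 / 8 := by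
  have heven : HasSum (fun k : ℕ => (1:ℝ) / (2 * (k:ℝ)) ^ 2) (π ^ 2 / 24) := by
    have h := hasSum_zeta_two.mul_left (1/4 : ℝ)
    have : (1/4 : ℝ) * (π ^ 2 / 6) = π ^ 2 / 24 := by ring
    rw [this] at h
    refine h.congr_fun fun k => ?_
    rw [div_mul_div_comm]
    congr 1 <;> ring
  have hodd : Summable (fun k : ℕ => (1:ℝ) / (2 * (k:ℝ) + 1) ^ 2) :=
    summable_shift 2 1 one_le_two le_rfl
  have hsplit := tsum_even_add_odd (f := fun n : ℕ => (1:ℝ) / (n:ℝ) ^ 2)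
    (heven.summable.congr fun k => by push_cast; ring_nf)
    (hodd.congr fun k => by push_cast; ring_nf)
  have h1 : ∑' k : ℕ, (1:ℝ) / ((2 * k : ℕ):ℝ) ^ 2 = π ^ 2 / 24 := by
    rw [← heven.tsum_eq]; exact tsum_congr fun k => by push_cast; ring_nf
  have h2 : ∑' k : ℕ, (1:ℝ) / ((2 * k + 1 : ℕ):ℝ) ^ 2
      = ∑' k : ℕ, (1:ℝ) / (2 * (k:ℝ) + 1) ^ 2 :=
    tsum_congr fun k => by push_cast; ring_nf
  rw [h1, h2, hasSum_zeta_two.tsum_eq] at hsplit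
  linarith

theorem hurwitzZeta_two_three_quarters_catalan :
    ∑' n : ℕ, (1:ℝ) / ((n:ℝ) + 3/4) ^ 2 =
      Real.pi ^ 2 - 8 * ∑' n : ℕ, (-1:ℝ) ^ n / (2*(n:ℝ) + 1) ^ 2 := by
  have hS1 : Summable (fun j : ℕ => (1:ℝ) / (4 * (j:ℝ) + 1) ^ 2) :=
    summable_shift 4 1 (by norm_num) le_rfl
  have hS3 : Summable (fun j : ℕ => (1:ℝ) / (4 * (j:ℝ) + 3) ^ 2) :=
    summable_shift 4 3 (by norm_num) (by norm_num)
  set S1 : ℝ := ∑' j : ℕ, (1:ℝ) / (4 * (j:ℝ) + 1) ^ 2 with hS1def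
  set S3 : ℝ := ∑' j : ℕ, (1:ℝ) / (4 * (j:ℝ) + 3) ^ 2 with hS3def
  -- split odd sum into 4j+1 and 4j+3
  have hsplit := tsum_even_add_odd (f := fun k : ℕ => (1:ℝ) / (2 * (k:ℝ) + 1) ^ 2)
    (hS1.congr fun j => by push_cast; ring_nf)
    (hS3.congr fun j => by push_cast; ring_nf)
  have e1 : ∑' j : ℕ, (1:ℝ) / (2 * ((2 * j : ℕ):ℝ) + 1) ^ 2 = S1 :=
    tsum_congr fun j => by push_cast; ring_nf
  have e3 : ∑' j : ℕ, (1:ℝ) / (2 * ((2 * j + 1 : ℕ):ℝ) + 1) ^ 2 = S3 :=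
    tsum_congr fun j => by push_cast; ring_nf
  rw [e1, e3, odd_sum] at hsplit
  -- Catalan split
  have hcat := tsum_even_add_odd (f := fun n : ℕ => (-1:ℝ) ^ n / (2 * (n:ℝ) + 1) ^ 2)
    (hS1.congr fun j => by
      push_cast
      rw [pow_mul]
      norm_num
      ring_nf)
    ((hS3.neg).congr fun j => by
      push_cast
      rw [pow_add, pow_mul]
      norm_num
      ring_nf)
  have c1 : ∑' j : ℕ, (-1:ℝ) ^ (2 * j) / (2 * ((2 * j : ℕ):ℝ) + 1) ^ 2 = S1 :=
    tsum_congr fun j => by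
      push_cast
      rw [pow_mul]
      norm_num
      ring_nf
  have c3 : ∑' j : ℕ, (-1:ℝ) ^ (2 * j + 1) / (2 * ((2 * j + 1 : ℕ):ℝ) + 1) ^ 2 = -S3 := by
    rw [hS3def, ← tsum_neg]
    refine tsum_congr fun j => ?_
    push_cast
    rw [pow_add, pow_mul]
    norm_num
    ring_nf
  rw [c1, c3] at hcat
  -- LHS = 16 * S3
  have hL : ∑' n : ℕ, (1:ℝ) / ((n:ℝ) + 3/4) ^ 2 = 16 * S3 := by
    rw [hS3def, ← tsum_mul_left]
    refine tsum_congr fun n => ?_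
    rw [mul_one_div]
    rw [div_eq_div_iff (by positivity) (by positivity)]
    ring
  rw [hL, ← hcat]
  linarith
end
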